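/- Define f : ℝ → ℝ by f(x) := min{0, h(|x|)} − g(|x|), where h(x) := e^{−1/|x|}·sin(1/x) for x ≠ 0, h(0) := 0, and g(x) := ∫₀ˣ (u^{−2} e^{−1/|u|} sin(1/u) − u^{−2} e^{−1/|u|}) du (integrand understood as 0 at u = 0). Then the conclusion of the convergence lemma fails at x* = 0: for every r > 0 there exists ε ∈ (0, r) such that for every δ > 0 there exists a δ-stationary point x₀ of f with ε ≤ x₀ < r. -/
import Mathlib

open Filter Metric Set Real

noncomputable section

/-- Left derivative `f′₋(x) = d`: `(f y - f x)/(y - x) → d` as `y ↑ x`. -/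
def HasLeftDeriv (f : ℝ → ℝ) (x d : ℝ) : Prop :=
  Filter.Tendsto (fun y : ℝ => (f y - f x) / (y - x)) (nhdsWithin x (Set.Iio x)) (nhds d)

/-- Right derivative `f′₊(x) = d`: `(f y - f x)/(y - x) → d` as `y ↓ x`. -/
def HasRightDeriv (f : ℝ → ℝ) (x d : ℝ) : Prop :=
  Filter.Tendsto (fun y : ℝ => (f y - f x) / (y - x)) (nhdsWithin x (Set.Ioi x)) (nhds d)

/-- `x` is a `δ`-stationary point of `f : ℝ → ℝ`: `f′₋(x) ≤ δ` and `f′₊(x) ≥ -δ`. -/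
def IsDeltaStationaryPt1 (f : ℝ → ℝ) (δ x : ℝ) : Prop :=
  ∃ dm dp : ℝ, HasLeftDeriv f x dm ∧ HasRightDeriv f x dp ∧ dm ≤ δ ∧ -δ ≤ dp

/-- `x` is a stationary point of `f : ℝ → ℝ`: `f′₋(x) ≤ 0` and `f′₊(x) ≥ 0`. -/
def IsStationaryPt1 (f : ℝ → ℝ) (x : ℝ) : Prop :=
  IsDeltaStationaryPt1 f 0 x

/-- `h(x) = e^{-1/|x|} sin(1/x)` for `x ≠ 0`, `h(0) = 0`. -/
def hEx (x : ℝ) : ℝ := if x = 0 then 0 else Real.exp (-1 / |x|) * Real.sin (1 / x)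

/-- `g(x) = ∫₀ˣ (u⁻² e^{-1/|u|} sin(1/u) - u⁻² e^{-1/|u|}) du`, integrand `0` at `u = 0`. -/
def gEx (x : ℝ) : ℝ := ∫ u in (0 : ℝ)..x,
  if u = 0 then 0
  else u⁻¹ ^ 2 * Real.exp (-1 / |u|) * Real.sin (1 / u) - u⁻¹ ^ 2 * Real.exp (-1 / |u|)

/-- `f(x) = min {0, h(|x|)} - g(|x|)`. -/
def fEx (x : ℝ) : ℝ := min 0 (hEx |x|) - gEx |x|

/-- The integrand of `gEx`. -/
def FEx (u : ℝ) : ℝ :=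
  if u = 0 then 0
  else u⁻¹ ^ 2 * Real.exp (-1 / |u|) * Real.sin (1 / u) - u⁻¹ ^ 2 * Real.exp (-1 / |u|)

lemma FEx_bound (u : ℝ) : |FEx u| ≤ 12 * |u| := by
  unfold FEx
  rcases eq_or_ne u 0 with rfl | hu
  · simp
  · rw [if_neg hu]
    have hupos : 0 < |u| := abs_pos.mpr hu
    have hexp : Real.exp (-1 / |u|) ≤ 6 * |u| ^ 3 := by
      have h1 := Real.pow_div_factorial_le_exp (x := 1/|u|) (by positivity) 3
      norm_num [Nat.factorial] at h1
      have h3 : Real.exp (-1 / |u|) = (Real.exp (|u|⁻¹))⁻¹ := by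
        rw [← Real.exp_neg]; ring_nf
      rw [h3, inv_le_comm₀ (Real.exp_pos _) (by positivity)]
      calc (6 * |u| ^ 3)⁻¹ = (|u| ^ 3)⁻¹ / 6 := by
            rw [mul_inv, div_eq_mul_inv]; ring
        _ ≤ Real.exp (|u|⁻¹) := h1
    have hb : u⁻¹ ^ 2 * Real.exp (-1 / |u|) ≤ 6 * |u| := by
      have : u⁻¹ ^ 2 = (|u| ^ 2)⁻¹ := by
        rw [← abs_pow, abs_of_nonneg (by positivity), inv_pow]
      rw [this]
      rw [inv_mul_le_iff₀ (by positivity)]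
      calc Real.exp (-1/|u|) ≤ 6 * |u| ^ 3 := hexp
        _ = |u| ^ 2 * (6 * |u|) := by ring
    have hbpos : 0 ≤ u⁻¹ ^ 2 * Real.exp (-1 / |u|) := by positivity
    have hfac : u⁻¹ ^ 2 * Real.exp (-1 / |u|) * Real.sin (1 / u) - u⁻¹ ^ 2 * Real.exp (-1 / |u|)
        = (u⁻¹ ^ 2 * Real.exp (-1 / |u|)) * (Real.sin (1/u) - 1) := by ring
    calc |u⁻¹ ^ 2 * Real.exp (-1 / |u|) * Real.sin (1 / u) - u⁻¹ ^ 2 * Real.exp (-1 / |u|)|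
        = (u⁻¹ ^ 2 * Real.exp (-1 / |u|)) * |Real.sin (1/u) - 1| := by
          rw [hfac, abs_mul, abs_of_nonneg hbpos]
      _ ≤ (u⁻¹ ^ 2 * Real.exp (-1 / |u|)) * 2 := by
          apply mul_le_mul_of_nonneg_left _ hbpos
          have := Real.neg_one_le_sin (1/u)
          have := Real.sin_le_one (1/u)
          rw [abs_le]; constructor <;> linarith
      _ ≤ 6 * |u| * 2 := by linarith
      _ = 12 * |u| := by ring

lemma FEx_continuous : Continuous FEx := by
  rw [continuous_iff_continuousAt]
  intro x
  rcases eq_or_ne x 0 with rfl | hx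
  · rw [ContinuousAt]
    have hF0 : FEx 0 = 0 := by simp [FEx]
    rw [hF0]
    have : Tendsto (fun u : ℝ => |FEx u|) (nhds 0) (nhds 0) := by
      apply squeeze_zero (fun u => abs_nonneg _) FEx_bound
      have : Tendsto (fun u : ℝ => 12 * |u|) (nhds 0) (nhds (12 * |(0:ℝ)|)) := by
        exact (continuous_const.mul continuous_abs).tendsto 0
      simpa using this
    exact tendsto_zero_iff_abs_tendsto_zero FEx |>.mpr this
  · have heq : (fun u : ℝ => u⁻¹ ^ 2 * Real.exp (-1 / |u|) * Real.sin (1 / u)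
        - u⁻¹ ^ 2 * Real.exp (-1 / |u|)) =ᶠ[nhds x] FEx := by
      filter_upwards [isOpen_ne.mem_nhds (show x ≠ 0 from hx)] with u hu
      simp [FEx, hu]
    apply ContinuousAt.congr _ heq
    have h1 : ContinuousAt (fun u : ℝ => u⁻¹ ^ 2 * Real.exp (-1 / |u|)) x := by
      apply ContinuousAt.mul
      · exact (continuousAt_inv₀ hx).pow 2
      · apply Real.continuous_exp.continuousAt.comp
        exact (continuousAt_const.div (continuous_abs.continuousAt) (abs_ne_zero.mpr hx))
    have h2 : ContinuousAt (fun u : ℝ => Real.sin (1 / u)) x :=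
      Real.continuous_sin.continuousAt.comp
        (continuousAt_const.div continuousAt_id hx)
    exact (h1.mul h2).sub h1

lemma hasDerivAt_gEx (x : ℝ) : HasDerivAt gEx (FEx x) x := by
  have hg : gEx = fun x => ∫ u in (0:ℝ)..x, FEx u := rfl
  rw [hg]
  exact intervalIntegral.integral_hasDerivAt_right
    (FEx_continuous.intervalIntegrable 0 x)
    (FEx_continuous.stronglyMeasurableAtFilter _ _)
    FEx_continuous.continuousAt

/-- At `x₀ = (π/2 + 2πk)⁻¹` the function `fEx` has (two-sided) derivative `0`. -/
lemma hasDerivAt_fEx_zero {x₀ : ℝ} (hx₀ : 0 < x₀) (hs : Real.sin (1 / x₀) = 1) :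
    HasDerivAt fEx 0 x₀ := by
  have hx₀' : x₀ ≠ 0 := ne_of_gt hx₀
  have hF : FEx x₀ = 0 := by
    simp only [FEx, if_neg hx₀', hs, mul_one, sub_self]
  -- continuity of x ↦ sin (1/x) at x₀; eventually positive
  have hcont : ContinuousAt (fun x : ℝ => Real.sin (1 / x)) x₀ :=
    Real.continuous_sin.continuousAt.comp (continuousAt_const.div continuousAt_id hx₀')
  have hpos : ∀ᶠ x in nhds x₀, 0 < Real.sin (1 / x) := by
    have h1 : Tendsto (fun x : ℝ => Real.sin (1 / x)) (nhds x₀) (nhds (Real.sin (1/x₀))) :=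
      hcont
    rw [hs] at h1
    exact h1.eventually (eventually_gt_nhds one_pos)
  have hxpos : ∀ᶠ x in nhds x₀, 0 < x := eventually_gt_nhds hx₀
  have heq : fEx =ᶠ[nhds x₀] fun x => -gEx x := by
    filter_upwards [hpos, hxpos] with x hsx hx
    have hxabs : |x| = x := abs_of_pos hx
    have hhx : 0 ≤ hEx x := by
      rw [hEx, if_neg (ne_of_gt hx)]
      exact le_of_lt (mul_pos (Real.exp_pos _) hsx)
    simp [fEx, hxabs, min_eq_left hhx]
  have hder : HasDerivAt (fun x => -gEx x) 0 x₀ := by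
    have := (hasDerivAt_gEx x₀).neg
    rwa [hF, neg_zero] at this
  exact hder.congr_of_eventuallyEq heq

/-- The conclusion of the convergence lemma fails for `f` at `x* = 0`: for every
`r > 0` there is `ε ∈ (0, r)` such that for every `δ > 0` there is a `δ`-stationary
point `x₀` of `f` with `ε ≤ x₀ < r`. -/
theorem fEx_convergence_lemma_fails :
    ∀ r > 0, ∃ ε ∈ Set.Ioo (0 : ℝ) r, ∀ δ > 0,
      ∃ x₀ : ℝ, ε ≤ x₀ ∧ x₀ < r ∧ IsDeltaStationaryPt1 fEx δ x₀ := by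
  intro r hr
  set k : ℕ := ⌈1/r⌉₊ + 1 with hk
  set c : ℝ := π/2 + 2*π*k with hc
  have hπ := Real.pi_gt_three
  have hkc : (1:ℝ)/r < k := by
    have h1 : (1:ℝ)/r ≤ ⌈1/r⌉₊ := Nat.le_ceil _
    have h2 : (⌈1/r⌉₊ : ℝ) < k := by exact_mod_cast Nat.lt_succ_self _
    linarith
  have hkpos : (0:ℝ) < k := lt_of_le_of_lt (by positivity) hkc
  have hcbig : 1/r < c := by
    have : (k:ℝ) ≤ 2*π*k := by nlinarith
    rw [hc]; nlinarith
  have hcpos : 0 < c := lt_trans (by positivity) hcbig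
  set x₀ : ℝ := c⁻¹ with hx₀def
  have hx₀pos : 0 < x₀ := inv_pos.mpr hcpos
  have hx₀lt : x₀ < r := by
    rw [hx₀def, inv_lt_iff_one_lt_mul₀ hcpos]
    calc (1:ℝ) = (1/r) * r := by field_simp
      _ < c * r := by exact mul_lt_mul_of_pos_right hcbig hr
      _ = r * c := mul_comm c r
  have hs : Real.sin (1 / x₀) = 1 := by
    have h1 : 1 / x₀ = c := by rw [hx₀def, one_div, inv_inv]
    rw [h1, hc]
    have : π/2 + 2*π*k = π/2 + k * (2*π) := by ring
    rw [this, Real.sin_add_nat_mul_two_pi, Real.sin_pi_div_two]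
  have hder : HasDerivAt fEx 0 x₀ := hasDerivAt_fEx_zero hx₀pos hs
  have hslope : Tendsto (slope fEx x₀) (nhdsWithin x₀ {x₀}ᶜ) (nhds 0) :=
    hasDerivAt_iff_tendsto_slope.mp hder
  refine ⟨x₀, ⟨hx₀pos, hx₀lt⟩, fun δ hδ => ⟨x₀, le_refl _, hx₀lt, 0, 0, ?_, ?_, hδ.le, by linarith⟩⟩
  · have h := hslope.mono_left (nhdsWithin_mono _ (fun y (hy : y ∈ Set.Iio x₀) => ne_of_lt hy))
    exact h.congr fun y => slope_def_field fEx x₀ y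
  · have h := hslope.mono_left (nhdsWithin_mono _ (fun y (hy : y ∈ Set.Ioi x₀) => ne_of_gt hy))
    exact h.congr fun y => slope_def_field fEx x₀ y
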